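/- Let C be a Hamiltonian cycle of a graph G of order n ≥ 5 with vertices v_1,...,v_n in cyclic order, and suppose G has three chords v_{i_1}v_{j_1}, v_{i_2}v_{j_2}, v_{i_3}v_{j_3} with 1 ≤ i_1 < i_2 < i_3 < j_1 < j_2 < j_3 ≤ n (pairwise crossing). Then G has an orientation of diameter at most n - 2. -/

import Mathlib

open SimpleGraph

/-- `R` is an orientation of the simple graph `G`: every arc of `R` lies on an edge of `G`,
and every edge of `G` receives exactly one of its two possible directions. -/
def IsOrientation {V : Type*} (G : SimpleGraph V) (R : V → V → Prop) : Prop :=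
  (∀ u v, R u v → G.Adj u v) ∧ ∀ u v, G.Adj u v → (R u v ↔ ¬ R v u)

/-- `RelPow R k u v` : there is a directed walk of length `k` from `u` to `v`. -/
def RelPow {V : Type*} (R : V → V → Prop) : ℕ → V → V → Prop
  | 0, u, v => u = v
  | n + 1, u, v => ∃ w, R u w ∧ RelPow R n w v

/-- The digraph `R` has diameter at most `d`: any vertex can reach any other by a
directed walk of length at most `d`. -/
def DiamLE {V : Type*} (R : V → V → Prop) (d : ℕ) : Prop :=
  ∀ u v, ∃ k ≤ d, RelPow R k u v

/-- A digraph is strongly connected if every vertex can reach every other. -/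
def StronglyConnected {V : Type*} (R : V → V → Prop) : Prop :=
  ∀ u v, Relation.ReflTransGen R u v

/-- A graph is bridgeless if it is connected and contains no bridge. -/
def Bridgeless {V : Type*} (G : SimpleGraph V) : Prop :=
  G.Connected ∧ ∀ e, ¬ G.IsBridge e

/-- The graph `G_{n,d}`: the path `u_1 … u_d` is the set of indices `0,…,d-1`,
the clique `K_{n-d-1}` is the set of indices `d,…,n-2`, both endpoints `0` and `d-1`
of the path are joined to all clique vertices, and the extra vertex `u_3'` is the
index `n-1`, joined to `u_2, u_3, u_4`, i.e. to indices `1, 2, 3`. -/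
def Gnd (n d : ℕ) : SimpleGraph (Fin n) :=
  SimpleGraph.fromRel (fun i j =>
    ((i : ℕ) + 1 = (j : ℕ) ∧ (j : ℕ) < d) ∨
    (d ≤ (i : ℕ) ∧ (i : ℕ) < n - 1 ∧ d ≤ (j : ℕ) ∧ (j : ℕ) < n - 1) ∨
    (((i : ℕ) = 0 ∨ (i : ℕ) = d - 1) ∧ d ≤ (j : ℕ) ∧ (j : ℕ) < n - 1) ∨
    ((i : ℕ) = n - 1 ∧ ((j : ℕ) = 1 ∨ (j : ℕ) = 2 ∨ (j : ℕ) = 3)))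

/-- The graph `H_{n,n-2}`: the cycle `u_1 … u_{n-1} u_1` is the set of indices
`0,…,n-2` in cyclic order, and the extra vertex `u_3'` is the index `n-1`,
joined to `u_2, u_3, u_4`, i.e. to indices `1, 2, 3`. -/
def Hgraph (n : ℕ) : SimpleGraph (Fin n) :=
  SimpleGraph.fromRel (fun i j =>
    ((i : ℕ) + 1 = (j : ℕ) ∧ (j : ℕ) ≤ n - 2) ∨
    ((i : ℕ) = 0 ∧ (j : ℕ) = n - 2) ∨
    ((i : ℕ) = n - 1 ∧ ((j : ℕ) = 1 ∨ (j : ℕ) = 2 ∨ (j : ℕ) = 3)))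

/-!
Orient the Hamiltonian cycle forwards, `k → k + 1`, the middle chord `i₂j₂` backwards and every
other chord from the smaller to the larger index. Walking along the cycle reaches every vertex
within `n - 1` steps, and within `n - 2` unless the target `v` is the predecessor of the start `u`.
For such a pair one of the three chords skips a vertex of the cycle path from `u` to `v`:
`i₁ → j₁` if `u ∉ (i₁, j₁]`, `j₂ → i₂` if `u ∈ (i₂, j₂]`, and otherwise `u ∈ (i₁, i₂]`, which lies
outside `(i₃, j₃]`, so `i₃ → j₃` does.
-/

theorem RelPow.trans {V : Type*} {R : V → V → Prop} {a b : ℕ} {u w v : V}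
    (huw : RelPow R a u w) (hwv : RelPow R b w v) : RelPow R (a + b) u v := by
  induction a generalizing u with
  | zero =>
    obtain rfl : u = w := huw
    simpa using hwv
  | succ a ih =>
    obtain ⟨z, huz, hzw⟩ := huw
    rw [Nat.add_right_comm]
    exact ⟨z, huz, ih hzw⟩

def flipOrientation {V : Type*} [LinearOrder V] (G : SimpleGraph V) (F : Set (Sym2 V))
    (u v : V) : Prop :=
  G.Adj u v ∧ (u < v ↔ s(u, v) ∉ F)

theorem isOrientation_flipOrientation {V : Type*} [LinearOrder V] (G : SimpleGraph V)
    (F : Set (Sym2 V)) : IsOrientation G (flipOrientation G F) := by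
  refine ⟨fun u v h => h.1, fun u v huv => ?_⟩
  have hlt : v < u ↔ ¬ u < v := ⟨lt_asymm, (lt_or_gt_of_ne huv.ne).resolve_left⟩
  simp only [flipOrientation, huv, huv.symm, true_and, Sym2.eq_swap, hlt]
  tauto

namespace Fin

theorem val_sub_eq_ite {n : ℕ} (a b : Fin n) :
    ((a - b : Fin n) : ℕ) = if b ≤ a then (a : ℕ) - b else n + a - b := by
  split_ifs with h
  exacts [coe_sub_iff_le.2 h, coe_sub_iff_lt.2 (not_le.1 h)]

theorem two_le_val_sub {n : ℕ} [NeZero n] {a b : Fin n} (hne : a ≠ b) (hsucc : b ≠ a + 1) :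
    2 ≤ ((b - a : Fin n) : ℕ) := by
  obtain ⟨m, rfl⟩ := Nat.exists_eq_add_one_of_ne_zero (NeZero.ne n)
  have h0 : ((b - a : Fin (m + 1)) : ℕ) ≠ 0 := val_ne_zero_iff.2 (sub_ne_zero.2 hne.symm)
  have h1 : ((b - a : Fin (m + 1)) : ℕ) ≠ 1 := by
    intro h
    obtain ⟨m, rfl⟩ : ∃ k, m = k + 1 := Nat.exists_eq_add_one_of_ne_zero (by omega)
    exact hsucc (sub_eq_iff_eq_add'.1 (Fin.ext (by rw [h, val_one])))
  omega

theorem val_sub_le_val_sub {n : ℕ} {u a b : Fin n}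
    (h : ((u : ℕ) ≤ a ∧ (a : ℕ) ≤ b) ∨ ((a : ℕ) ≤ b ∧ (b : ℕ) < u) ∨
      ((b : ℕ) < u ∧ (u : ℕ) ≤ a)) :
    ((a - u : Fin n) : ℕ) ≤ (b - u : Fin n) := by
  simp only [val_sub_eq_ite, le_iff_val_le_val]
  split_ifs <;> omega

end Fin

section Cycle

variable {n : ℕ} [NeZero n] {R : Fin n → Fin n → Prop}

theorem relPow_val_sub (hcyc : ∀ k, R k (k + 1)) (u v : Fin n) :
    RelPow R (v - u : Fin n) u v := by
  obtain ⟨m, rfl⟩ := Nat.exists_eq_add_one_of_ne_zero (NeZero.ne n)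
  suffices ∀ d : ℕ, ∀ u : Fin (m + 1), ((v - u : Fin (m + 1)) : ℕ) = d → RelPow R d u v from
    this _ u rfl
  intro d
  induction d with
  | zero => exact fun u h => (sub_eq_zero.1 (Fin.val_eq_zero_iff.1 h)).symm
  | succ d ih =>
    intro u h
    have hne : v - u ≠ 0 := Fin.val_ne_zero_iff.1 (by omega)
    refine ⟨u + 1, hcyc u, ih _ ?_⟩
    rw [sub_add_eq_sub_sub, Fin.coe_sub_one, if_neg hne, h, Nat.add_sub_cancel]

/-- Walking forward from `u`, one meets `x` before `y` with at least one vertex in between,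
so an arc `x → y` shortens the cycle path from `u` to `u - 1`. -/
def IsShortcut (u x y : Fin n) : Prop :=
  ((x - u : Fin n) : ℕ) + 2 ≤ ((y - u : Fin n) : ℕ)

theorem isShortcut_of_le {u x y : Fin n} (hle : ((x - u : Fin n) : ℕ) ≤ (y - u : Fin n))
    (hgap : 2 ≤ ((y - x : Fin n) : ℕ)) : IsShortcut u x y := by
  rw [← sub_sub_sub_cancel_right y x u, Fin.sub_val_of_le (Fin.le_iff_val_le_val.2 hle)] at hgap
  unfold IsShortcut
  omega

theorem diamLE_of_forall_isShortcut (hcyc : ∀ k, R k (k + 1))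
    (hshort : ∀ u, ∃ x y, R x y ∧ IsShortcut u x y) : DiamLE R (n - 2) := by
  intro u v
  by_cases hnear : ((v - u : Fin n) : ℕ) ≤ n - 2
  · exact ⟨_, hnear, relPow_val_sub hcyc u v⟩
  obtain ⟨x, y, hxy, hxy_short⟩ := hshort u
  have hfar : ((v - u : Fin n) : ℕ) = n - 1 := by have := (v - u).isLt; omega
  have hyv : ((v - y : Fin n) : ℕ) = n - 1 - (y - u : Fin n) := by
    rw [← sub_sub_sub_cancel_right v y u, Fin.sub_val_of_le, hfar]
    rw [Fin.le_iff_val_le_val, hfar]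
    have := (y - u).isLt
    omega
  have hwalk : RelPow R (((x - u : Fin n) : ℕ) + 1 + (v - y : Fin n)) u v :=
    ((relPow_val_sub hcyc u x).trans (show RelPow R 1 x y from ⟨y, hxy, rfl⟩)).trans
      (relPow_val_sub hcyc y v)
  refine ⟨_, ?_, hwalk⟩
  unfold IsShortcut at hxy_short
  omega

end Cycle

section ChordOrientation

variable {m : ℕ} {G : SimpleGraph (Fin (m + 1))} {i j : Fin (m + 1)}

/-- The index order orients every cycle edge `k → k + 1` forwards except the closing edge
`m → 0`; flipping that edge and the chord `s(i, j)` orients the whole cycle forwards and the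
chord backwards. -/
def chordOrientation (G : SimpleGraph (Fin (m + 1))) (i j : Fin (m + 1)) :
    Fin (m + 1) → Fin (m + 1) → Prop :=
  flipOrientation G {s(Fin.last m, 0), s(i, j)}

theorem chordOrientation_add_one (hm : 2 ≤ m) (hchord : j ≠ i + 1 ∧ i ≠ j + 1) {k : Fin (m + 1)}
    (hadj : G.Adj k (k + 1)) : chordOrientation G i j k (k + 1) := by
  have hflip : s(k, k + 1) ∈ ({s(Fin.last m, 0), s(i, j)} : Set _) ↔ k = Fin.last m := by
    simp only [Set.mem_insert_iff, Set.mem_singleton_iff, Sym2.eq_iff]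
    refine ⟨?_, fun hk => Or.inl (Or.inl ⟨hk, by rw [hk, Fin.last_add_one]⟩)⟩
    rintro ((⟨rfl, -⟩ | ⟨rfl, h⟩) | (⟨rfl, rfl⟩ | ⟨rfl, rfl⟩))
    · rfl
    · rw [zero_add, Fin.ext_iff, Fin.val_last, Fin.val_one', Nat.mod_eq_of_lt (by omega)] at h
      omega
    · exact absurd rfl hchord.1
    · exact absurd rfl hchord.2
  exact ⟨hadj, by rw [Fin.lt_add_one_iff, Fin.lt_last_iff_ne_last, hflip]⟩

theorem chordOrientation_swap (hij : (i : ℕ) < j) (hadj : G.Adj i j) :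
    chordOrientation G i j j i :=
  ⟨hadj.symm, iff_of_false (by rw [Fin.lt_def]; omega)
    (not_not.2 (Set.mem_insert_of_mem _ Sym2.eq_swap))⟩

theorem chordOrientation_of_lt {x y : Fin (m + 1)} (hij : (i : ℕ) < j) (hxy : (x : ℕ) < y)
    (hxi : (x : ℕ) ≠ i) (hclose : ¬ ((x : ℕ) = 0 ∧ (y : ℕ) = m)) (hadj : G.Adj x y) :
    chordOrientation G i j x y := by
  refine ⟨hadj, iff_of_true (Fin.lt_def.2 hxy) ?_⟩
  simp only [Set.mem_insert_iff, Set.mem_singleton_iff, Sym2.eq_iff, Fin.ext_iff,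
    Fin.val_last, Fin.val_zero]
  omega

end ChordOrientation

theorem stmt_11_general (n : ℕ) [NeZero n] (G : SimpleGraph (Fin n))
    (hcycle : ∀ k : Fin n, G.Adj k (k + 1))
    (i₁ i₂ i₃ j₁ j₂ j₃ : Fin n)
    (h1 : (i₁ : ℕ) < (i₂ : ℕ)) (h2 : (i₂ : ℕ) < (i₃ : ℕ)) (h3 : (i₃ : ℕ) < (j₁ : ℕ))
    (h4 : (j₁ : ℕ) < (j₂ : ℕ)) (h5 : (j₂ : ℕ) < (j₃ : ℕ))
    (hf1 : G.Adj i₁ j₁) (hf2 : G.Adj i₂ j₂) (hf3 : G.Adj i₃ j₃)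
    (hchord1 : j₁ ≠ i₁ + 1 ∧ i₁ ≠ j₁ + 1)
    (hchord2 : j₂ ≠ i₂ + 1 ∧ i₂ ≠ j₂ + 1)
    (hchord3 : j₃ ≠ i₃ + 1 ∧ i₃ ≠ j₃ + 1) :
    ∃ R : Fin n → Fin n → Prop, IsOrientation G R ∧ DiamLE R (n - 2) := by
  obtain ⟨m, rfl⟩ := Nat.exists_eq_add_one_of_ne_zero (NeZero.ne n)
  have hj₃ := j₃.isLt
  have hcyc k := chordOrientation_add_one (by omega) hchord2 (hcycle k)
  have arc₁ : chordOrientation G i₂ j₂ i₁ j₁ :=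
    chordOrientation_of_lt (by omega) (by omega) (by omega) (by omega) hf1
  have arc₂ : chordOrientation G i₂ j₂ j₂ i₂ := chordOrientation_swap (by omega) hf2
  have arc₃ : chordOrientation G i₂ j₂ i₃ j₃ :=
    chordOrientation_of_lt (by omega) (by omega) (by omega) (by omega) hf3
  have gap₁ := Fin.two_le_val_sub (Fin.ne_of_val_ne (by omega)) hchord1.1
  have gap₂ := Fin.two_le_val_sub (Fin.ne_of_val_ne (by omega)) hchord2.2
  have gap₃ := Fin.two_le_val_sub (Fin.ne_of_val_ne (by omega)) hchord3.1
  refine ⟨_, isOrientation_flipOrientation G _, diamLE_of_forall_isShortcut hcyc fun u => ?_⟩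
  have hu := u.isLt
  rcases (by omega : ((u : ℕ) ≤ i₁ ∨ j₁ < (u : ℕ)) ∨ (i₂ < (u : ℕ) ∧ (u : ℕ) ≤ j₂) ∨
    (i₁ < (u : ℕ) ∧ (u : ℕ) ≤ i₂)) with hu | hu | hu
  · exact ⟨_, _, arc₁, isShortcut_of_le (Fin.val_sub_le_val_sub (by omega)) gap₁⟩
  · exact ⟨_, _, arc₂, isShortcut_of_le (Fin.val_sub_le_val_sub (by omega)) gap₂⟩
  · exact ⟨_, _, arc₃, isShortcut_of_le (Fin.val_sub_le_val_sub (by omega)) gap₃⟩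

theorem stmt_11 (n : ℕ) [NeZero n] (hn : 5 ≤ n) (G : SimpleGraph (Fin n))
    (hcycle : ∀ k : Fin n, G.Adj k (k + 1))
    (i₁ i₂ i₃ j₁ j₂ j₃ : Fin n)
    (h1 : (i₁ : ℕ) < (i₂ : ℕ)) (h2 : (i₂ : ℕ) < (i₃ : ℕ)) (h3 : (i₃ : ℕ) < (j₁ : ℕ))
    (h4 : (j₁ : ℕ) < (j₂ : ℕ)) (h5 : (j₂ : ℕ) < (j₃ : ℕ))
    (hf1 : G.Adj i₁ j₁) (hf2 : G.Adj i₂ j₂) (hf3 : G.Adj i₃ j₃)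
    (hchord1 : j₁ ≠ i₁ + 1 ∧ i₁ ≠ j₁ + 1)
    (hchord2 : j₂ ≠ i₂ + 1 ∧ i₂ ≠ j₂ + 1)
    (hchord3 : j₃ ≠ i₃ + 1 ∧ i₃ ≠ j₃ + 1) :
    ∃ R : Fin n → Fin n → Prop, IsOrientation G R ∧ DiamLE R (n - 2) :=
  stmt_11_general n G hcycle i₁ i₂ i₃ j₁ j₂ j₃ h1 h2 h3 h4 h5 hf1 hf2 hf3 hchord1 hchord2 hchord3
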